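/- arXiv:2202.12596 — 7 statements merged into one kernel-verified Lean document; each statement's English description precedes it below -/
import Mathlib

section
/- Let $(a_j)_{j\ge1}$ be a nonnegative sequence with $\sum_j a_j < \infty$ and $(b_j)_{j\ge1}$ a nonnegative sequence. Define $E(k) = \sum_{j=1}^k b_j + \sum_{j=k+1}^\infty a_j$ and let $k^* = \min\{k \ge 0 : \sum_{j=1}^k b_j \ge \sum_{j=k+1}^\infty a_j\}$ (assumed to exist and be $\ge 1$). Then for every $k \ge 0$, $E(k) \ge \frac{1}{2}\min(E(k^*), E(k^*-1))$. -/
open Finset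

theorem stmt_0 (a b : ℕ → ℝ) (ha : ∀ j, 0 ≤ a j) (hb : ∀ j, 0 ≤ b j)
    (hsum : Summable a)
    (E : ℕ → ℝ)
    (hE : ∀ k, E k = (∑ j ∈ Finset.Icc 1 k, b j) + ∑' j : ℕ, a (j + k + 1))
    (kstar : ℕ)
    (hks : IsLeast {k : ℕ | (∑' j : ℕ, a (j + k + 1)) ≤ ∑ j ∈ Finset.Icc 1 k, b j} kstar)
    (hks1 : 1 ≤ kstar) :
    ∀ k : ℕ, E k ≥ (1 / 2) * min (E kstar) (E (kstar - 1)) := by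
  set B : ℕ → ℝ := fun k => ∑ j ∈ Finset.Icc 1 k, b j with hB
  set T : ℕ → ℝ := fun k => ∑' j : ℕ, a (j + k + 1) with hTdef
  have hT : ∀ k, T k = (∑' j, a j) - ∑ i ∈ range (k+1), a i := by
    intro k
    have h := Summable.sum_add_tsum_nat_add (k+1) hsum
    have : (∑' j : ℕ, a (j + (k+1))) = T k := by
      simp only [hTdef, add_assoc]
    linarith [h, this]
  have hBmono : ∀ {m n : ℕ}, m ≤ n → B m ≤ B n := by
    intro m n hmn
    exact Finset.sum_le_sum_of_subset_of_nonneg (Finset.Icc_subset_Icc_right hmn)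
      (fun i _ _ => hb i)
  have hTmono : ∀ {m n : ℕ}, m ≤ n → T n ≤ T m := by
    intro m n hmn
    rw [hT, hT]
    have : ∑ i ∈ range (m+1), a i ≤ ∑ i ∈ range (n+1), a i :=
      Finset.sum_le_sum_of_subset_of_nonneg (Finset.range_subset_range.2 (by omega))
        (fun i _ _ => ha i)
    linarith
  have hBnn : ∀ k, 0 ≤ B k := fun k => Finset.sum_nonneg (fun i _ => hb i)
  have hTnn : ∀ k, 0 ≤ T k := fun k => tsum_nonneg (fun j => ha _)
  have h1 : T kstar ≤ B kstar := hks.1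
  have h2 : B (kstar - 1) < T (kstar - 1) := by
    by_contra h
    push_neg at h
    have := hks.2 h
    omega
  intro k
  rcases le_or_gt kstar k with hk | hk
  · have : E kstar ≤ 2 * E k := by
      rw [hE, hE]
      have := hBmono hk
      have := hTnn k
      have := hTnn kstar
      linarith
    have hmin : min (E kstar) (E (kstar - 1)) ≤ E kstar := min_le_left _ _
    linarith
  · have hk' : k ≤ kstar - 1 := by omega
    have : E (kstar - 1) ≤ 2 * E k := by
      rw [hE, hE]
      have := hTmono hk'
      have := hBnn k
      have := hBnn (kstar - 1)
      linarith
    have hmin : min (E kstar) (E (kstar - 1)) ≤ E (kstar - 1) := min_le_right _ _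
    linarith
end

section
/- Let $(\sigma_j)_{j\ge1}$ be a positive nonincreasing sequence, $(\xi_j)$ a nonnegative sequence, and $(x_j)$ a nonnegative sequence with $\sum_j x_j < \infty$ and $\sum_j \sigma_j^2 x_j < \infty$. Define $k_{pr} = \min\{k \ge 0 : \sum_{j=1}^k \xi_j \ge \sum_{j=k+1}^\infty \sigma_j^2 x_j\}$ and $k_{st} = \min\{k \ge 0 : \sum_{j=1}^k \xi_j/\sigma_j^2 \ge \sum_{j=k+1}^\infty x_j\}$, both assumed to exist. Then $k_{pr} \le k_{st}$. -/
set_option maxHeartbeats 800000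


open Finset

theorem stmt_1 (σ ξ x : ℕ → ℝ)
    (hσpos : ∀ j, 0 < σ j) (hσmono : ∀ i j, i ≤ j → σ j ≤ σ i)
    (hξ : ∀ j, 0 ≤ ξ j) (hx : ∀ j, 0 ≤ x j)
    (hxsum : Summable x) (hσxsum : Summable (fun j => σ j ^ 2 * x j))
    (kpr kst : ℕ)
    (hkpr : IsLeast {k : ℕ | (∑' j : ℕ, σ (j + k + 1) ^ 2 * x (j + k + 1))
      ≤ ∑ j ∈ Finset.Icc 1 k, ξ j} kpr)
    (hkst : IsLeast {k : ℕ | (∑' j : ℕ, x (j + k + 1))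
      ≤ ∑ j ∈ Finset.Icc 1 k, ξ j / σ j ^ 2} kst) :
    kpr ≤ kst := by
  apply hkpr.2
  have hmem := hkst.1
  simp only [Set.mem_setOf_eq] at hmem ⊢
  have hc : 0 < σ (kst + 1) := hσpos _
  have hxt : Summable (fun j => x (j + kst + 1)) :=
    (summable_nat_add_iff (kst + 1)).2 hxsum
  have hσxt : Summable (fun j => σ (j + kst + 1) ^ 2 * x (j + kst + 1)) :=
    (summable_nat_add_iff (kst + 1)).2 hσxsum
  calc (∑' j : ℕ, σ (j + kst + 1) ^ 2 * x (j + kst + 1))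
      ≤ ∑' j : ℕ, σ (kst + 1) ^ 2 * x (j + kst + 1) := by
        refine Summable.tsum_le_tsum (fun j => ?_) hσxt (hxt.mul_left _)
        have h1 : σ (j + kst + 1) ≤ σ (kst + 1) := hσmono _ _ (by omega)
        have h2 : 0 ≤ σ (j + kst + 1) := (hσpos _).le
        exact mul_le_mul_of_nonneg_right (pow_le_pow_left₀ h2 h1 2) (hx _)
    _ = σ (kst + 1) ^ 2 * ∑' j : ℕ, x (j + kst + 1) := tsum_mul_left
    _ ≤ σ (kst + 1) ^ 2 * ∑ j ∈ Finset.Icc 1 kst, ξ j / σ j ^ 2 := by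
        exact mul_le_mul_of_nonneg_left hmem (by positivity)
    _ = ∑ j ∈ Finset.Icc 1 kst, σ (kst + 1) ^ 2 * (ξ j / σ j ^ 2) := by
        rw [Finset.mul_sum]
    _ ≤ ∑ j ∈ Finset.Icc 1 kst, ξ j := by
        refine Finset.sum_le_sum (fun j hj => ?_)
        rw [Finset.mem_Icc] at hj
        have h1 : σ (kst + 1) ≤ σ j := hσmono _ _ (by omega)
        have h2 : 0 < σ j := hσpos j
        calc σ (kst + 1) ^ 2 * (ξ j / σ j ^ 2)
            ≤ σ j ^ 2 * (ξ j / σ j ^ 2) := by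
              refine mul_le_mul_of_nonneg_right (pow_le_pow_left₀ hc.le h1 2) ?_
              exact div_nonneg (hξ j) (by positivity)
          _ = ξ j := mul_div_cancel₀ _ (by positivity)
end

section
/- Let $r \in (1,2]$ and let $X_1, \dots, X_n$ be independent real random variables with $\mathbb{E}[X_j] = 0$ and $\mathbb{E}|X_j|^r < \infty$. Then $\mathbb{E}\left|\sum_{j=1}^n X_j\right|^r \le 2 \sum_{j=1}^n \mathbb{E}|X_j|^r$. -/
/-
Write `ψ_s(x) = x |x|^(s-1)`, so that `r ψ_(r-1)` is the derivative of `|x|^r`. For `0 < s ≤ 1`,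
`ψ_s` is `s`-Hölder with constant `2` (split according to the signs of the two points). Hence the
derivative of `t ↦ |a + t b|^r - t r ψ_(r-1)(a) b` is at most that of `t ↦ 2 t^r |b|^r`, which on
`[0, 1]` gives `|a + b|^r ≤ |a|^r + r ψ_(r-1)(a) b + 2 |b|^r` for `1 < r ≤ 2`. Taking `a` to be a
partial sum and `b` the next summand, independence and `E b = 0` kill the expectation of the
middle term, so each new summand adds at most `2 E|b|^r`.
-/

open MeasureTheory ProbabilityTheory Finset

noncomputable def signedRpow (s x : ℝ) : ℝ := x * |x| ^ (s - 1)

section SignedRpow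

variable {s : ℝ}

lemma signedRpow_of_nonneg (hs : 0 < s) {x : ℝ} (hx : 0 ≤ x) : signedRpow s x = x ^ s := by
  rw [signedRpow, abs_of_nonneg hx, ← Real.rpow_one_add' hx (by linarith), add_sub_cancel]

lemma signedRpow_neg (x : ℝ) : signedRpow s (-x) = -signedRpow s x := by
  simp [signedRpow]

lemma abs_signedRpow (hs : 0 < s) (x : ℝ) : |signedRpow s x| = |x| ^ s := by
  rw [signedRpow, abs_mul, abs_of_nonneg (Real.rpow_nonneg (abs_nonneg x) _),
    ← Real.rpow_one_add' (abs_nonneg x) (by linarith), add_sub_cancel]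

lemma monotone_signedRpow (hs : 0 < s) : Monotone (signedRpow s) :=
  monotone_of_odd_of_monotoneOn_nonneg signedRpow_neg fun y hy x hx hyx => by
    rw [signedRpow_of_nonneg hs hy, signedRpow_of_nonneg hs hx]
    exact Real.rpow_le_rpow hy hyx hs.le

lemma measurable_signedRpow : Measurable (signedRpow s) := by
  unfold signedRpow; fun_prop

lemma signedRpow_sub_le (hs0 : 0 < s) (hs1 : s ≤ 1) {x y : ℝ} (hyx : y ≤ x) :
    signedRpow s x - signedRpow s y ≤ 2 * (x - y) ^ s := by
  have h_nonneg : ∀ {x y : ℝ}, 0 ≤ y → y ≤ x →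
      signedRpow s x - signedRpow s y ≤ 2 * (x - y) ^ s := fun {x y} hy hyx => by
    have h_sub := Real.rpow_add_le_add_rpow hy (sub_nonneg.2 hyx) hs0.le hs1
    rw [add_sub_cancel] at h_sub
    rw [signedRpow_of_nonneg hs0 hy, signedRpow_of_nonneg hs0 (hy.trans hyx)]
    linarith [Real.rpow_nonneg (sub_nonneg.2 hyx) s]
  rcases le_total 0 y with hy | hy
  · exact h_nonneg hy hyx
  rcases le_total x 0 with hx | hx
  · have h := h_nonneg (neg_nonneg.2 hx) (neg_le_neg hyx)
    rwa [signedRpow_neg, signedRpow_neg, neg_sub_neg, neg_sub_neg] at h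
  · rw [← neg_neg y, signedRpow_neg, signedRpow_of_nonneg hs0 hx,
      signedRpow_of_nonneg hs0 (neg_nonneg.2 hy), sub_neg_eq_add, sub_neg_eq_add]
    have hx_le : x ^ s ≤ (x + -y) ^ s := Real.rpow_le_rpow hx (by linarith) hs0.le
    have hy_le : (-y) ^ s ≤ (x + -y) ^ s := Real.rpow_le_rpow (by linarith) (by linarith) hs0.le
    linarith

lemma abs_signedRpow_sub_le (hs0 : 0 < s) (hs1 : s ≤ 1) (x y : ℝ) :
    |signedRpow s x - signedRpow s y| ≤ 2 * |x - y| ^ s := by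
  wlog hyx : y ≤ x generalizing x y
  · rw [abs_sub_comm, abs_sub_comm x]
    exact this y x (le_of_not_ge hyx)
  rw [abs_of_nonneg (sub_nonneg.2 (monotone_signedRpow hs0 hyx)), abs_of_nonneg (sub_nonneg.2 hyx)]
  exact signedRpow_sub_le hs0 hs1 hyx

lemma signedRpow_sub_mul_le (hs0 : 0 < s) (hs1 : s ≤ 1) (a b : ℝ) {t : ℝ} (ht : 0 ≤ t) :
    (signedRpow s (a + t * b) - signedRpow s a) * b ≤ 2 * t ^ s * |b| ^ (s + 1) :=
  calc (signedRpow s (a + t * b) - signedRpow s a) * b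
      ≤ |signedRpow s (a + t * b) - signedRpow s a| * |b| := (le_abs_self _).trans (abs_mul _ _).le
    _ ≤ 2 * |t * b| ^ s * |b| := by
      gcongr
      simpa using abs_signedRpow_sub_le hs0 hs1 (a + t * b) a
    _ = 2 * t ^ s * |b| ^ (s + 1) := by
      rw [abs_mul, abs_of_nonneg ht, Real.mul_rpow ht (abs_nonneg b),
        Real.rpow_add_one' (abs_nonneg b) (by linarith)]
      ring

end SignedRpow

lemma hasDerivAt_abs_rpow_eq_signedRpow {r : ℝ} (hr : 1 < r) (x : ℝ) :
    HasDerivAt (fun y : ℝ => |y| ^ r) (r * signedRpow (r - 1) x) x := by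
  convert hasDerivAt_abs_rpow x hr using 1
  rw [signedRpow, sub_sub, one_add_one_eq_two]
  ring

lemma abs_add_rpow_le {r : ℝ} (hr1 : 1 < r) (hr2 : r ≤ 2) (a b : ℝ) :
    |a + b| ^ r ≤ |a| ^ r + r * signedRpow (r - 1) a * b + 2 * |b| ^ r := by
  set F : ℝ → ℝ := fun t =>
    |a + t * b| ^ r - t * (r * signedRpow (r - 1) a * b) - 2 * |b| ^ r * t ^ r
  have hF : ∀ t, HasDerivAt F (r * signedRpow (r - 1) (a + t * b) * b
      - r * signedRpow (r - 1) a * b - 2 * |b| ^ r * (r * t ^ (r - 1))) t := by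
    intro t
    have h_affine : HasDerivAt (fun t => a + t * b) b t := by
      simpa using ((hasDerivAt_id t).mul_const b).const_add a
    exact (((hasDerivAt_abs_rpow_eq_signedRpow hr1 _).comp t h_affine).sub
      (hasDerivAt_mul_const _)).sub
      ((Real.hasDerivAt_rpow_const (Or.inr hr1.le)).const_mul _)
  have h_anti : AntitoneOn F (Set.Icc 0 1) := by
    refine antitoneOn_of_hasDerivWithinAt_nonpos (convex_Icc 0 1)
      (fun t _ => (hF t).continuousAt.continuousWithinAt) (fun t _ => (hF t).hasDerivWithinAt)
      fun t ht => ?_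
    rw [interior_Icc] at ht
    have h := signedRpow_sub_mul_le (s := r - 1) (by linarith) (by linarith) a b ht.1.le
    rw [sub_add_cancel] at h
    linear_combination r * h
  have h := h_anti (Set.left_mem_Icc.2 zero_le_one) (Set.right_mem_Icc.2 zero_le_one) zero_le_one
  simp only [F, zero_mul, add_zero, one_mul, Real.one_rpow, mul_one,
    Real.zero_rpow (by linarith : r ≠ 0), mul_zero, sub_zero] at h
  linarith

section Moments

variable {Ω : Type*} [MeasurableSpace Ω] {μ : Measure Ω} {r : ℝ}

lemma integrable_abs_rpow_iff_memLp {f : Ω → ℝ} (hf : AEStronglyMeasurable f μ) (hr : 0 < r) :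
    Integrable (fun ω => |f ω| ^ r) μ ↔ MemLp f (ENNReal.ofReal r) μ := by
  simpa [ENNReal.toReal_ofReal hr.le] using
    integrable_norm_rpow_iff hf (ENNReal.ofReal_pos.2 hr).ne' ENNReal.ofReal_ne_top

variable [IsProbabilityMeasure μ]

lemma integral_abs_add_rpow_le (hr1 : 1 < r) (hr2 : r ≤ 2) {S Y : Ω → ℝ} (hSY : IndepFun S Y μ)
    (hS : MemLp S (ENNReal.ofReal r) μ) (hY : MemLp Y (ENNReal.ofReal r) μ) (hY0 : μ[Y] = 0) :
    ∫ ω, |S ω + Y ω| ^ r ∂μ ≤ ∫ ω, |S ω| ^ r ∂μ + 2 * ∫ ω, |Y ω| ^ r ∂μ := by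
  have hr0 : 0 < r := by linarith
  have h_int : ∀ {f : Ω → ℝ}, MemLp f (ENNReal.ofReal r) μ → Integrable (fun ω => |f ω| ^ r) μ :=
    fun hf => (integrable_abs_rpow_iff_memLp hf.1 hr0).2 hf
  have hψS : Integrable (fun ω => signedRpow (r - 1) (S ω)) μ := by
    refine (integrable_norm_iff
      (measurable_signedRpow.comp_aemeasurable hS.1.aemeasurable).aestronglyMeasurable).1 ?_
    simp_rw [Function.comp_apply, Real.norm_eq_abs, abs_signedRpow (sub_pos.2 hr1)]
    simpa using integrable_norm_rpow_of_le (p := r - 1) (q := r) hS.1 (sub_nonneg.2 hr1.le) hr0.le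
      (by linarith) (h_int hS)
  have hψSY : IndepFun (fun ω => signedRpow (r - 1) (S ω)) Y μ :=
    hSY.comp measurable_signedRpow measurable_id
  have hY1 : Integrable Y μ := hY.integrable (ENNReal.one_le_ofReal.2 hr1.le)
  have h_cross_int : Integrable (fun ω => signedRpow (r - 1) (S ω) * Y ω) μ :=
    hψSY.integrable_mul hψS hY1
  have h_cross : ∫ ω, signedRpow (r - 1) (S ω) * Y ω ∂μ = 0 := by
    rw [hψSY.integral_fun_mul_eq_mul_integral hψS.1 hY1.1, hY0, mul_zero]
  have h_main_int : Integrable (fun ω => |S ω| ^ r + r * (signedRpow (r - 1) (S ω) * Y ω)) μ :=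
    (h_int hS).add (h_cross_int.const_mul r)
  calc ∫ ω, |S ω + Y ω| ^ r ∂μ
      ≤ ∫ ω, |S ω| ^ r + r * (signedRpow (r - 1) (S ω) * Y ω) + 2 * |Y ω| ^ r ∂μ :=
        integral_mono (h_int (hS.add hY)) (h_main_int.add ((h_int hY).const_mul 2)) fun ω => by
          linarith [abs_add_rpow_le hr1 hr2 (S ω) (Y ω)]
    _ = ∫ ω, |S ω| ^ r ∂μ + 2 * ∫ ω, |Y ω| ^ r ∂μ := by
        rw [integral_add h_main_int ((h_int hY).const_mul 2),
          integral_add (h_int hS) (h_cross_int.const_mul r), integral_const_mul,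
          integral_const_mul, h_cross, mul_zero, add_zero]

theorem integral_abs_sum_rpow_le (hr1 : 1 < r) (hr2 : r ≤ 2) {ι : Type*} {X : ι → Ω → ℝ}
    (hmeas : ∀ i, Measurable (X i)) (hindep : iIndepFun X μ)
    (hX : ∀ i, MemLp (X i) (ENNReal.ofReal r) μ) (hmean : ∀ i, μ[X i] = 0) (s : Finset ι) :
    ∫ ω, |∑ i ∈ s, X i ω| ^ r ∂μ ≤ 2 * ∑ i ∈ s, ∫ ω, |X i ω| ^ r ∂μ := by
  classical
  induction s using Finset.induction_on with
  | empty => simp [Real.zero_rpow (by linarith : r ≠ 0)]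
  | insert i s hi ih =>
    have h_step := integral_abs_add_rpow_le hr1 hr2 (hindep.indepFun_finsetSum_of_notMem hmeas hi)
      (memLp_finsetSum' s fun j _ => hX j) (hX i) (hmean i)
    simp only [Finset.sum_apply] at h_step
    simp only [sum_insert hi, add_comm (X i _)]
    linarith

end Moments

theorem stmt_3_general {Ω : Type*} [MeasureSpace Ω] [IsProbabilityMeasure (ℙ : Measure Ω)]
    (r : ℝ) (hr1 : 1 < r) (hr2 : r ≤ 2) (n : ℕ)
    (X : ℕ → Ω → ℝ) (hmeas : ∀ j, Measurable (X j))
    (hindep : iIndepFun X ℙ)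
    (hmean : ∀ j, ∫ ω, X j ω = 0)
    (hmomint : ∀ j, Integrable (fun ω => |X j ω| ^ r)) :
    ∫ ω, |∑ j ∈ Finset.range n, X j ω| ^ r
      ≤ 2 * ∑ j ∈ Finset.range n, ∫ ω, |X j ω| ^ r :=
  integral_abs_sum_rpow_le hr1 hr2 hmeas hindep
    (fun j => (integrable_abs_rpow_iff_memLp (hmeas j).aestronglyMeasurable (by linarith)).1
      (hmomint j)) hmean (range n)

theorem stmt_3 {Ω : Type*} [MeasureSpace Ω] [IsProbabilityMeasure (ℙ : Measure Ω)]
    (r : ℝ) (hr1 : 1 < r) (hr2 : r ≤ 2) (n : ℕ)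
    (X : ℕ → Ω → ℝ) (hmeas : ∀ j, Measurable (X j))
    (hindep : iIndepFun X ℙ)
    (hint : ∀ j, Integrable (X j))
    (hmean : ∀ j, ∫ ω, X j ω = 0)
    (hmomint : ∀ j, Integrable (fun ω => |X j ω| ^ r)) :
    ∫ ω, |∑ j ∈ Finset.range n, X j ω| ^ r
      ≤ 2 * ∑ j ∈ Finset.range n, ∫ ω, |X j ω| ^ r :=
  stmt_3_general r hr1 hr2 n X hmeas hindep hmean hmomint
end

section
/- Let $Z$ be white noise with finite second moments, $y^\delta = y^\dagger + \delta Z$, and $(u_j)$ an orthonormal basis. For $\varepsilon > 0$ and $\kappa \in \mathbb{N}$, $\mathbb{P}\left(\exists\, m \ge \kappa : \left|\sum_{j=1}^m (y^\delta - y^\dagger, u_j)^2 - m\delta^2\right| > \varepsilon m \delta^2\right) \le \frac{1}{\varepsilon}\,\mathbb{E}\left[\left|\frac{1}{\kappa}\sum_{j=1}^\kappa ((Z,u_j)^2 - 1)\right|\right]$, and this bound tends to $0$ as $\kappa \to \infty$, uniformly in $\delta$. -/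
/-!
Put `X l = Z (l + 1) ^ 2 - 1`, an i.i.d. centred integrable sequence, and `S m = ∑_{l < m} X l`;
after dividing by `δ ^ 2` the event is `∃ m ≥ κ, ε m < |S m|`. The joint law of `(X l)` is
invariant under permutations of coordinates, so for `i < m` the integral `∫ g(X) X i` does not
depend on `i` whenever `g` only sees `S m, X m, X (m + 1), …` (the reverse martingale property of
`S m / m`). Decomposing `{∃ m ∈ [κ, N], ε m < |S m|}` by the last such `m`, the piece `A m` is
of this kind, and with `g = sign (S m)` on `A m` one gets
`ε κ P(A m) ≤ (κ / m) ∫_{A m} |S m| = ∫_{A m} sign (S m) S κ ≤ ∫_{A m} |S κ|`.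
Summing over `m` and letting `N → ∞` gives the bound; the limit is the `L¹` strong law.
-/

open MeasureTheory ProbabilityTheory Finset Filter
open scoped Topology

lemma Finset.sum_Icc_one_eq_sum_range {M : Type*} [AddCommMonoid M] (f : ℕ → M) (n : ℕ) :
    ∑ j ∈ Icc 1 n, f j = ∑ l ∈ range n, f (l + 1) := by
  rw [← Finset.Ico_add_one_right_eq_Icc, sum_Ico_eq_sum_range]
  simp [add_comm]

lemma Finset.sum_range_comp_swap {M : Type*} [AddCommMonoid M] (v : ℕ → M) {i j n : ℕ}
    (hi : i < n) (hj : j < n) :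
    ∑ k ∈ range n, v (Equiv.swap i j k) = ∑ k ∈ range n, v k := by
  refine Equiv.Perm.sum_comp _ _ _ fun k hk => ?_
  have : k = i ∨ k = j := by
    by_contra! h
    exact hk (Equiv.swap_apply_of_ne_of_ne h.1 h.2)
  rcases this with rfl | rfl <;> simpa

section LastExit

variable {α : Type*} (E : ℕ → Set α) (N : ℕ)

def lastExit (m : ℕ) : Set α := E m \ ⋃ l ∈ Ioc m N, E l

variable {E N}

lemma disjoint_lastExit_of_lt {m m' : ℕ} (h : m < m') (hm' : m' ≤ N) :
    Disjoint (lastExit E N m) (lastExit E N m') :=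
  Set.disjoint_left.2 fun _ hx hx' =>
    hx.2 (Set.mem_biUnion (Finset.mem_Ioc.2 ⟨h, hm'⟩) hx'.1)

lemma pairwiseDisjoint_lastExit (a : ℕ) :
    (Icc a N : Set ℕ).PairwiseDisjoint (lastExit E N) := by
  intro m hm m' hm' hne
  simp only [coe_Icc, Set.mem_Icc] at hm hm'
  rcases hne.lt_or_gt with h | h
  · exact disjoint_lastExit_of_lt h hm'.2
  · exact (disjoint_lastExit_of_lt h hm.2).symm

lemma biUnion_lastExit (a : ℕ) : ⋃ m ∈ Icc a N, lastExit E N m = ⋃ m ∈ Icc a N, E m := by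
  classical
  refine subset_antisymm (Set.biUnion_mono subset_rfl fun _ _ => Set.sdiff_subset) ?_
  simp only [Set.iUnion_subset_iff]
  intro m hm x hx
  set F := (Icc a N).filter (x ∈ E ·)
  have hF : F.Nonempty := ⟨m, mem_filter.2 ⟨hm, hx⟩⟩
  obtain ⟨hM, hxM⟩ := mem_filter.1 (F.max'_mem hF)
  refine Set.mem_biUnion hM ⟨hxM, ?_⟩
  simp only [Set.mem_iUnion, mem_Ioc, not_exists]
  intro l ⟨hMl, hlN⟩ hxl
  have hlF : l ∈ F := mem_filter.2 ⟨mem_Icc.2 ⟨(mem_Icc.1 hM).1.trans hMl.le, hlN⟩, hxl⟩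
  exact (F.le_max' l hlF).not_gt hMl

lemma mem_lastExit_congr {m : ℕ} {x y : α} (h : ∀ l, m ≤ l → (x ∈ E l ↔ y ∈ E l)) :
    x ∈ lastExit E N m ↔ y ∈ lastExit E N m := by
  simp only [lastExit, Set.mem_sdiff, Set.mem_iUnion, mem_Ioc, exists_prop]
  rw [h m le_rfl]
  constructor
  all_goals
    rintro ⟨h1, h2⟩
    refine ⟨h1, fun ⟨l, hl, hl'⟩ => h2 ⟨l, hl, ?_⟩⟩
    simpa [h l hl.1.le] using hl'

lemma MeasurableSet.lastExit [MeasurableSpace α] (hE : ∀ l, MeasurableSet (E l)) (m : ℕ) :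
    MeasurableSet (lastExit E N m) :=
  (hE m).diff (Finset.measurableSet_biUnion _ fun l _ => hE l)

end LastExit

section Exchangeable

variable {Ω : Type*} [MeasurableSpace Ω] {μ : Measure Ω}

lemma identDistrib_precomp_of_iIndepFun {ι β : Type*} [MeasurableSpace β] {X : ι → Ω → β}
    (hX : ∀ i, Measurable (X i)) (hindep : iIndepFun X μ) {e : ι → ι} (he : e.Injective)
    (hident : ∀ i, IdentDistrib (X (e i)) (X i) μ μ) :
    IdentDistrib (fun ω i => X (e i) ω) (fun ω i => X i ω) μ μ where
  aemeasurable_fst := (measurable_pi_lambda _ fun i => hX (e i)).aemeasurable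
  aemeasurable_snd := (measurable_pi_lambda _ hX).aemeasurable
  map_eq := by
    rw [(hindep.precomp he).map_fun_eq_infinitePi_map (fun i => hX (e i)),
      hindep.map_fun_eq_infinitePi_map hX]
    simp_rw [(hident _).map_eq]

variable {X : ℕ → Ω → ℝ}

lemma integral_mul_eq_of_comp_swap_eq (hX : ∀ i, Measurable (X i)) (hindep : iIndepFun X μ)
    (hident : ∀ i, IdentDistrib (X i) (X 0) μ μ) {g : (ℕ → ℝ) → ℝ} (hg : Measurable g)
    {i j : ℕ} (hgσ : ∀ v, g (v ∘ Equiv.swap i j) = g v) :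
    ∫ ω, g (fun k => X k ω) * X i ω ∂μ = ∫ ω, g (fun k => X k ω) * X j ω ∂μ := by
  have hlaw := identDistrib_precomp_of_iIndepFun hX hindep (Equiv.swap i j).injective
    fun k => (hident _).trans (hident k).symm
  have := (hlaw.comp (u := fun v => g v * v i) (by fun_prop)).integral_eq
  simp only [Function.comp_def, Equiv.swap_apply_left] at this
  rw [← this]
  congr with ω
  exact congrArg (· * X j ω) (hgσ fun k => X k ω)

lemma integral_mul_sum_eq (hX : ∀ i, Measurable (X i)) (hindep : iIndepFun X μ)
    (hident : ∀ i, IdentDistrib (X i) (X 0) μ μ) (hint : Integrable (X 0) μ)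
    {g : (ℕ → ℝ) → ℝ} (hg : Measurable g) (hg_le : ∀ v, |g v| ≤ 1) {n : ℕ}
    (hgσ : ∀ i < n, ∀ v, g (v ∘ Equiv.swap i 0) = g v) :
    ∫ ω, g (fun k => X k ω) * ∑ l ∈ range n, X l ω ∂μ =
      n * ∫ ω, g (fun k => X k ω) * X 0 ω ∂μ := by
  have hgX : Measurable fun ω => g (fun k => X k ω) := hg.comp (measurable_pi_lambda _ hX)
  simp_rw [mul_sum]
  rw [integral_finsetSum _ fun l _ => ((hident l).integrable_iff.2 hint).bdd_mul
      hgX.aestronglyMeasurable (.of_forall fun ω => hg_le _)]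
  rw [sum_congr rfl fun l hl => integral_mul_eq_of_comp_swap_eq hX hindep hident hg
    (hgσ l (mem_range.1 hl)), sum_const, card_range, nsmul_eq_mul]

end Exchangeable

def partialSumExceeds (ε : ℝ) (l : ℕ) : Set (ℕ → ℝ) :=
  {v | ε * l < |∑ k ∈ range l, v k|}

lemma measurableSet_partialSumExceeds (ε : ℝ) (l : ℕ) :
    MeasurableSet (partialSumExceeds ε l) :=
  measurableSet_lt measurable_const (by fun_prop)

section LastExitSign

variable (ε : ℝ) (N m : ℕ)

noncomputable def lastExitSign : (ℕ → ℝ) → ℝ :=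
  (lastExit (partialSumExceeds ε) N m).indicator
    fun v => if 0 ≤ ∑ k ∈ range m, v k then 1 else -1

variable {ε N m}

lemma measurable_lastExitSign : Measurable (lastExitSign ε N m) :=
  (Measurable.ite (measurableSet_le measurable_const (by fun_prop)) measurable_const
    measurable_const).indicator (.lastExit (measurableSet_partialSumExceeds ε) m)

lemma abs_lastExitSign_le (v : ℕ → ℝ) : |lastExitSign ε N m v| ≤ 1 := by
  classical
  simp only [lastExitSign, Set.indicator_apply]
  split_ifs <;> simp

lemma lastExitSign_comp_swap {i j : ℕ} (hi : i < m) (hj : j < m) (v : ℕ → ℝ) :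
    lastExitSign ε N m (v ∘ Equiv.swap i j) = lastExitSign ε N m v := by
  classical
  have hsum : ∀ l, m ≤ l → ∑ k ∈ range l, v (Equiv.swap i j k) = ∑ k ∈ range l, v k :=
    fun l hl => sum_range_comp_swap v (hi.trans_le hl) (hj.trans_le hl)
  have hmem : v ∘ Equiv.swap i j ∈ lastExit (partialSumExceeds ε) N m ↔
      v ∈ lastExit (partialSumExceeds ε) N m := mem_lastExit_congr fun l hl => by
    simp only [partialSumExceeds, Set.mem_ofPred_eq, Function.comp_apply, hsum l hl]
  simp only [lastExitSign, Set.indicator_apply, hmem, Function.comp_apply, hsum m le_rfl]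

lemma lastExitSign_mul_sum (v : ℕ → ℝ) :
    lastExitSign ε N m v * ∑ k ∈ range m, v k =
      (lastExit (partialSumExceeds ε) N m).indicator (fun v => |∑ k ∈ range m, v k|) v := by
  classical
  simp only [lastExitSign, Set.indicator_apply]
  split_ifs with h1 h2 <;> simp_all [abs_of_nonneg, abs_of_neg]

lemma lastExitSign_mul_le (v : ℕ → ℝ) (t : ℝ) :
    lastExitSign ε N m v * t ≤
      (lastExit (partialSumExceeds ε) N m).indicator (fun _ => |t|) v := by
  classical
  simp only [lastExitSign, Set.indicator_apply]
  split_ifs <;> simp [le_abs_self, neg_le_abs]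

end LastExitSign

section MaximalInequality

variable {Ω : Type*} [MeasurableSpace Ω] {μ : Measure Ω} [IsFiniteMeasure μ]
  {X : ℕ → Ω → ℝ}

lemma mul_measureReal_lastExit_le (hX : ∀ i, Measurable (X i)) (hindep : iIndepFun X μ)
    (hident : ∀ i, IdentDistrib (X i) (X 0) μ μ) (hint : Integrable (X 0) μ) (ε : ℝ)
    {κ m : ℕ} (hκm : κ ≤ m) (N : ℕ) :
    ε * κ * μ.real ((fun ω k => X k ω) ⁻¹' lastExit (partialSumExceeds ε) N m) ≤
      ∫ ω in (fun ω k => X k ω) ⁻¹' lastExit (partialSumExceeds ε) N m,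
        |∑ l ∈ range κ, X l ω| ∂μ := by
  set W : Ω → ℕ → ℝ := fun ω k => X k ω
  set A := W ⁻¹' lastExit (partialSumExceeds ε) N m
  set g := lastExitSign ε N m
  have hg : Measurable g := measurable_lastExitSign
  have hg_le : ∀ v, |g v| ≤ 1 := abs_lastExitSign_le
  have hgσ : ∀ i < m, ∀ v, g (v ∘ Equiv.swap i 0) = g v := fun _ hi =>
    lastExitSign_comp_swap hi (Nat.zero_lt_of_lt hi)
  have hA : MeasurableSet A :=
    measurable_pi_lambda _ hX (.lastExit (measurableSet_partialSumExceeds ε) m)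
  have hS : ∀ n, Integrable (fun ω => ∑ l ∈ range n, X l ω) μ := fun n =>
    integrable_finsetSum _ fun l _ => (hident l).integrable_iff.2 hint
  have hlow : ε * m * μ.real A ≤ ∫ ω in A, |∑ l ∈ range m, X l ω| ∂μ :=
    setIntegral_ge_of_const_le_real hA (measure_ne_top _ _) (fun ω hω => hω.1.le)
      (hS m).abs.integrableOn
  have h_eq : ∫ ω, g (W ω) * ∑ l ∈ range m, X l ω ∂μ =
      ∫ ω in A, |∑ l ∈ range m, X l ω| ∂μ := by
    rw [← integral_indicator hA]
    exact integral_congr_ae (.of_forall fun ω => lastExitSign_mul_sum (W ω))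
  have h_le : ∫ ω, g (W ω) * ∑ l ∈ range κ, X l ω ∂μ ≤
      ∫ ω in A, |∑ l ∈ range κ, X l ω| ∂μ := by
    rw [← integral_indicator hA]
    exact integral_mono
      ((hS κ).bdd_mul (hg.comp (measurable_pi_lambda _ hX)).aestronglyMeasurable
        (.of_forall fun ω => hg_le _))
      ((hS κ).abs.indicator hA) fun ω => lastExitSign_mul_le (W ω) _
  have hm := integral_mul_sum_eq hX hindep hident hint hg hg_le hgσ
  have hκ := integral_mul_sum_eq hX hindep hident hint hg hg_le
    fun i hi => hgσ i (hi.trans_le hκm)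
  have key :
      (m : ℝ) * (ε * κ * μ.real A) ≤ m * ∫ ω in A, |∑ l ∈ range κ, X l ω| ∂μ :=
    calc (m : ℝ) * (ε * κ * μ.real A) = κ * (ε * m * μ.real A) := by ring
      _ ≤ κ * ∫ ω, g (W ω) * ∑ l ∈ range m, X l ω ∂μ := by rw [h_eq]; gcongr
      _ = m * ∫ ω, g (W ω) * ∑ l ∈ range κ, X l ω ∂μ := by rw [hm, hκ]; ring
      _ ≤ m * ∫ ω in A, |∑ l ∈ range κ, X l ω| ∂μ := by gcongr
  rcases m.eq_zero_or_pos with rfl | hm_pos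
  · obtain rfl : κ = 0 := Nat.le_zero.1 hκm
    simp
  · exact le_of_mul_le_mul_left key (by exact_mod_cast hm_pos)

lemma mul_measureReal_exists_lt_abs_sum_le (hX : ∀ i, Measurable (X i))
    (hindep : iIndepFun X μ) (hident : ∀ i, IdentDistrib (X i) (X 0) μ μ)
    (hint : Integrable (X 0) μ) (ε : ℝ) (κ N : ℕ) :
    ε * κ * μ.real {ω | ∃ m ∈ Icc κ N, ε * m < |∑ l ∈ range m, X l ω|} ≤
      ∫ ω, |∑ l ∈ range κ, X l ω| ∂μ := by
  set W : Ω → ℕ → ℝ := fun ω k => X k ω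
  have hWm : Measurable W := measurable_pi_lambda _ hX
  have hA : ∀ m, MeasurableSet (W ⁻¹' lastExit (partialSumExceeds ε) N m) := fun m =>
    hWm (.lastExit (measurableSet_partialSumExceeds ε) m)
  have hdisj :
      (Icc κ N : Set ℕ).PairwiseDisjoint (W ⁻¹' lastExit (partialSumExceeds ε) N ·) :=
    fun m hm m' hm' hne => (pairwiseDisjoint_lastExit κ hm hm' hne).preimage W
  have hSκ : Integrable (fun ω => |∑ l ∈ range κ, X l ω|) μ :=
    (integrable_finsetSum _ fun l _ => (hident l).integrable_iff.2 hint).abs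
  have hset : {ω | ∃ m ∈ Icc κ N, ε * m < |∑ l ∈ range m, X l ω|} =
      ⋃ m ∈ Icc κ N, W ⁻¹' lastExit (partialSumExceeds ε) N m := by
    simp_rw [← Set.preimage_iUnion₂, biUnion_lastExit]
    ext ω
    simp [W, partialSumExceeds]
  rw [hset, measureReal_biUnion_finset hdisj fun m _ => hA m, mul_sum]
  calc ∑ m ∈ Icc κ N, ε * κ * μ.real (W ⁻¹' lastExit (partialSumExceeds ε) N m)
      ≤ ∑ m ∈ Icc κ N, ∫ ω in W ⁻¹' lastExit (partialSumExceeds ε) N m,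
          |∑ l ∈ range κ, X l ω| ∂μ :=
        sum_le_sum fun m hm =>
          mul_measureReal_lastExit_le hX hindep hident hint ε (mem_Icc.1 hm).1 N
    _ = ∫ ω in ⋃ m ∈ Icc κ N, W ⁻¹' lastExit (partialSumExceeds ε) N m,
          |∑ l ∈ range κ, X l ω| ∂μ :=
        (integral_biUnion_finset _ (fun m _ => hA m) hdisj fun m _ => hSκ.integrableOn).symm
    _ ≤ ∫ ω, |∑ l ∈ range κ, X l ω| ∂μ :=
        setIntegral_le_integral hSκ (.of_forall fun ω => abs_nonneg _)

theorem measure_exists_lt_abs_sum_le (hX : ∀ i, Measurable (X i)) (hindep : iIndepFun X μ)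
    (hident : ∀ i, IdentDistrib (X i) (X 0) μ μ) (hint : Integrable (X 0) μ) {ε : ℝ}
    (hε : 0 < ε) {κ : ℕ} (hκ : 0 < κ) :
    μ {ω | ∃ m, κ ≤ m ∧ ε * m < |∑ l ∈ range m, X l ω|} ≤
      ENNReal.ofReal ((ε * κ)⁻¹ * ∫ ω, |∑ l ∈ range κ, X l ω| ∂μ) := by
  have hU : {ω | ∃ m, κ ≤ m ∧ ε * m < |∑ l ∈ range m, X l ω|} =
      ⋃ N, {ω | ∃ m ∈ Icc κ N, ε * m < |∑ l ∈ range m, X l ω|} := by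
    ext ω
    simp only [Set.mem_ofPred_eq, Set.mem_iUnion, mem_Icc]
    exact ⟨fun ⟨m, hm, h⟩ => ⟨m, m, ⟨hm, le_rfl⟩, h⟩,
      fun ⟨_, m, hm, h⟩ => ⟨m, hm.1, h⟩⟩
  have hmono : Monotone fun N => {ω | ∃ m ∈ Icc κ N, ε * m < |∑ l ∈ range m, X l ω|} :=
    fun N N' hN _ ⟨m, hm, h⟩ => ⟨m, Icc_subset_Icc le_rfl hN hm, h⟩
  rw [hU, hmono.measure_iUnion]
  refine iSup_le fun N => ?_
  rw [← ofReal_measureReal]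
  exact ENNReal.ofReal_le_ofReal <| (le_inv_mul_iff₀ (by positivity)).2 <|
    mul_measureReal_exists_lt_abs_sum_le hX hindep hident hint ε κ N

end MaximalInequality

lemma tendsto_integral_abs_inv_mul_sum {Ω : Type*} [MeasurableSpace Ω] {μ : Measure Ω}
    {X : ℕ → Ω → ℝ} (hindep : iIndepFun X μ)
    (hident : ∀ i, IdentDistrib (X i) (X 0) μ μ)
    (hint : Integrable (X 0) μ) (hmean : ∫ ω, X 0 ω ∂μ = 0) :
    Tendsto (fun n : ℕ => ∫ ω, |(n : ℝ)⁻¹ * ∑ l ∈ range n, X l ω| ∂μ) atTop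
      (𝓝 0) := by
  have h := strong_law_Lp le_rfl ENNReal.one_ne_top X (memLp_one_iff_integrable.2 hint)
    (fun i j hij => hindep.indepFun hij) hident
  simp only [hmean, sub_zero, smul_eq_mul] at h
  have := (ENNReal.tendsto_toReal ENNReal.zero_ne_top).comp h
  rw [ENNReal.toReal_zero] at this
  refine this.congr fun n => ?_
  have hS : Integrable (fun ω => (n : ℝ)⁻¹ * ∑ l ∈ range n, X l ω) μ :=
    (integrable_finsetSum _ fun l _ => (hident l).integrable_iff.2 hint).const_mul _
  simp only [Function.comp_apply, eLpNorm_one_eq_lintegral_enorm,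
    ← integral_norm_eq_lintegral_enorm hS.aestronglyMeasurable, Real.norm_eq_abs]

lemma sum_Icc_sq_mul_sub_eq (a : ℕ → ℝ) (δ : ℝ) (m : ℕ) :
    ∑ j ∈ Icc 1 m, (δ * a j) ^ 2 - m * δ ^ 2 =
      δ ^ 2 * ∑ l ∈ range m, (a (l + 1) ^ 2 - 1) := by
  simp only [sum_Icc_one_eq_sum_range, mul_sum, mul_sub, sum_sub_distrib, mul_pow, sum_const,
    card_range, nsmul_eq_mul, mul_one]
  ring

theorem stmt_5 {Ω : Type*} [MeasureSpace Ω] [IsProbabilityMeasure (ℙ : Measure Ω)]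
    (Z : ℕ → Ω → ℝ) (hmeas : ∀ j, Measurable (Z j))
    (hindep : iIndepFun Z ℙ)
    (hident : ∀ j, IdentDistrib (Z j) (Z 1) ℙ ℙ)
    (hint : Integrable (fun ω => Z 1 ω ^ 2))
    (hvar : ∫ ω, Z 1 ω ^ 2 = 1)
    (δ : ℝ) (hδ : 0 < δ) (ε : ℝ) (hε : 0 < ε) (κ : ℕ) (hκ : 1 ≤ κ) :
    ℙ {ω | ∃ m, κ ≤ m ∧
        ε * m * δ ^ 2 < |(∑ j ∈ Finset.Icc 1 m, (δ * Z j ω) ^ 2) - m * δ ^ 2|}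
      ≤ ENNReal.ofReal
          ((1 / ε) * ∫ ω, |(1 / (κ : ℝ)) * ∑ j ∈ Finset.Icc 1 κ, (Z j ω ^ 2 - 1)|) ∧
    Tendsto (fun κ : ℕ => ∫ ω, |(1 / (κ : ℝ)) * ∑ j ∈ Finset.Icc 1 κ, (Z j ω ^ 2 - 1)|)
      atTop (nhds 0) := by
  set X : ℕ → Ω → ℝ := fun l ω => Z (l + 1) ω ^ 2 - 1
  have hsq : Measurable fun x : ℝ => x ^ 2 - 1 := by fun_prop
  have hX : ∀ l, Measurable (X l) := fun l => hsq.comp (hmeas _)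
  have hXindep : iIndepFun X ℙ :=
    (hindep.precomp (add_left_injective 1)).comp _ fun _ => hsq
  have hXident : ∀ l, IdentDistrib (X l) (X 0) ℙ ℙ := fun l => (hident (l + 1)).comp hsq
  have hXint : Integrable (X 0) := hint.sub (integrable_const 1)
  have hXmean : ∫ ω, X 0 ω = 0 := by simp [X, integral_sub hint (integrable_const 1), hvar]
  have havg : ∀ n : ℕ, (fun ω => |(1 / (n : ℝ)) * ∑ j ∈ Icc 1 n, (Z j ω ^ 2 - 1)|) =
      fun ω => |(n : ℝ)⁻¹ * ∑ l ∈ range n, X l ω| := fun n => by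
    simp only [one_div, sum_Icc_one_eq_sum_range, X]
  refine ⟨?_, by simpa only [havg] using
    tendsto_integral_abs_inv_mul_sum hXindep hXident hXint hXmean⟩
  have hevent : ∀ ω m, ε * m * δ ^ 2 < |∑ j ∈ Icc 1 m, (δ * Z j ω) ^ 2 - m * δ ^ 2| ↔
      ε * m < |∑ l ∈ range m, X l ω| := fun ω m => by
    rw [sum_Icc_sq_mul_sub_eq, abs_mul, abs_of_pos (by positivity), mul_comm _ (δ ^ 2),
      mul_lt_mul_iff_right₀ (by positivity)]
  simp only [hevent]
  rw [havg κ]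
  convert measure_exists_lt_abs_sum_le hX hXindep hXident hXint hε hκ using 2
  simp only [abs_mul, abs_inv, Nat.abs_cast, integral_const_mul]
  ring
end

section
/- Let $(y^\delta_j)_{j\ge1}$ be a real sequence, $\delta, \tau > 0$. For $m \in \mathbb{N}$ define $k_{dp}(m) = \min\{0 \le k \le m : \sum_{j=k+1}^m (y^\delta_j)^2 \le \tau^2 m \delta^2\}$ and $k_{dp} = \sup_m k_{dp}(m)$ (assumed finite). Define also Lepski's index $k_{Lep} = \min\{k \ge 0 : \sum_{j=k+1}^m (y^\delta_j)^2 \le \tau^2 m \delta^2 \text{ for all } m > k\}$. Then $k_{dp} = k_{Lep}$. -/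
open Finset

theorem stmt_6 (y : ℕ → ℝ) (δ τ : ℝ) (hδ : 0 < δ) (hτ : 0 < τ)
    (kdp : ℕ → ℕ)
    (hkdp : ∀ m, kdp m = sInf {k : ℕ | k ≤ m ∧
      (∑ j ∈ Finset.Icc (k + 1) m, y j ^ 2) ≤ τ ^ 2 * m * δ ^ 2})
    (hbdd : BddAbove (Set.range kdp)) :
    sSup (Set.range kdp)
      = sInf {k : ℕ | ∀ m, k < m →
        (∑ j ∈ Finset.Icc (k + 1) m, y j ^ 2) ≤ τ ^ 2 * m * δ ^ 2} := by
  have hb : ∀ m : ℕ, (0:ℝ) ≤ τ ^ 2 * m * δ ^ 2 := by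
    intro m; positivity
  have hne : ∀ m : ℕ, {k : ℕ | k ≤ m ∧
      (∑ j ∈ Finset.Icc (k + 1) m, y j ^ 2) ≤ τ ^ 2 * m * δ ^ 2}.Nonempty := by
    intro m
    refine ⟨m, le_rfl, ?_⟩
    rw [Finset.Icc_eq_empty (by omega), Finset.sum_empty]
    exact hb m
  have hmem : ∀ m, kdp m ≤ m ∧
      (∑ j ∈ Finset.Icc (kdp m + 1) m, y j ^ 2) ≤ τ ^ 2 * m * δ ^ 2 := by
    intro m
    have := Nat.sInf_mem (hne m)
    rw [← hkdp m] at this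
    exact this
  set K := sSup (Set.range kdp) with hK
  have hKmem : K ∈ {k : ℕ | ∀ m, k < m →
      (∑ j ∈ Finset.Icc (k + 1) m, y j ^ 2) ≤ τ ^ 2 * m * δ ^ 2} := by
    intro m hm
    have hkm : kdp m ≤ K := le_csSup hbdd ⟨m, rfl⟩
    refine le_trans ?_ (hmem m).2
    apply Finset.sum_le_sum_of_subset_of_nonneg
    · apply Finset.Icc_subset_Icc_left; omega
    · intro i _ _; exact sq_nonneg _
  refine le_antisymm ?_ (Nat.sInf_le hKmem)
  refine le_csInf ⟨K, hKmem⟩ ?_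
  intro k hk
  refine csSup_le ⟨kdp 0, 0, rfl⟩ ?_
  rintro _ ⟨m, rfl⟩
  by_cases h : m ≤ k
  · exact le_trans (hmem m).1 h
  · push_neg at h
    have : k ∈ {j : ℕ | j ≤ m ∧
        (∑ i ∈ Finset.Icc (j + 1) m, y i ^ 2) ≤ τ ^ 2 * m * δ ^ 2} :=
      ⟨h.le, hk m h⟩
    rw [hkdp m]
    exact Nat.sInf_le this
end

section
/- Let $(a_j)$ be a nonnegative summable sequence, $(b_j)$ nonnegative, and suppose for some $\kappa \ge 3$ and all $m \ge \kappa/3$: $\frac{2}{3} m \le \sum_{j=1}^m b_j \le \frac{4}{3} m$. Define $\bar k = \min\{k \ge 0 : k \ge \sum_{j=k+1}^\infty a_j\}$ and $k_{pr} = \min\{k \ge 0 : \sum_{j=1}^k b_j \ge \sum_{j=k+1}^\infty a_j\}$. If $\bar k \ge \kappa$, then $k_{pr} - 1 \ge \kappa/3$. -/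
open Finset

lemma tail_anti (a : ℕ → ℝ) (ha : ∀ j, 0 ≤ a j) (hsum : Summable a) {k l : ℕ} (h : k ≤ l) :
    (∑' j : ℕ, a (j + l + 1)) ≤ ∑' j : ℕ, a (j + k + 1) := by
  apply Summable.tsum_le_tsum_of_inj (fun j => j + (l - k))
  · intro x y hxy
    simpa using hxy
  · intro c _
    exact ha _
  · intro j
    apply le_of_eq
    congr 1
    omega
  · exact (summable_nat_add_iff (l + 1)).mpr hsum
  · exact (summable_nat_add_iff (k + 1)).mpr hsum

theorem stmt_10 (a b : ℕ → ℝ) (ha : ∀ j, 0 ≤ a j) (hb : ∀ j, 0 ≤ b j)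
    (hsum : Summable a) (κ : ℝ) (hκ : 3 ≤ κ)
    (hcontrol : ∀ m : ℕ, κ / 3 ≤ (m : ℝ) →
      (2 / 3) * m ≤ (∑ j ∈ Finset.Icc 1 m, b j) ∧ (∑ j ∈ Finset.Icc 1 m, b j) ≤ (4 / 3) * m)
    (kbar kpr : ℕ)
    (hkbar : IsLeast {k : ℕ | (∑' j : ℕ, a (j + k + 1)) ≤ (k : ℝ)} kbar)
    (hkpr : IsLeast {k : ℕ | (∑' j : ℕ, a (j + k + 1)) ≤ ∑ j ∈ Finset.Icc 1 k, b j} kpr)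
    (hbig : κ ≤ (kbar : ℝ)) :
    κ / 3 ≤ (kpr : ℝ) - 1 := by
  set n := kbar
  have hn3 : 3 ≤ n := by exact_mod_cast le_trans hκ hbig
  set m := (n + 2) / 3 with hm
  have hmn : m ≤ n - 1 := by omega
  have h4m : (4 : ℝ) / 3 * m ≤ (n : ℝ) - 1 := by
    have h0 : 4 * ((n + 2) / 3) + 3 ≤ 3 * n := by omega
    have h' : (4 : ℝ) * m + 3 ≤ 3 * n := by exact_mod_cast h0
    linarith
  have hκm : κ / 3 ≤ (m : ℝ) := by
    have : n ≤ 3 * m := by omega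
    have h' : (n : ℝ) ≤ 3 * m := by exact_mod_cast this
    linarith
  by_contra hcon
  push_neg at hcon
  have hkprm : kpr ≤ m := by
    have : (kpr : ℝ) < (m : ℝ) + 1 := by linarith
    exact_mod_cast Nat.lt_succ_iff.mp (by exact_mod_cast this)
  -- chain
  have h1 : (∑' j : ℕ, a (j + m + 1)) ≤ ∑' j : ℕ, a (j + kpr + 1) :=
    tail_anti a ha hsum hkprm
  have h2 : (∑' j : ℕ, a (j + kpr + 1)) ≤ ∑ j ∈ Finset.Icc 1 kpr, b j := hkpr.1
  have h3 : (∑ j ∈ Finset.Icc 1 kpr, b j) ≤ ∑ j ∈ Finset.Icc 1 m, b j := by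
    apply Finset.sum_le_sum_of_subset_of_nonneg
    · exact Finset.Icc_subset_Icc le_rfl hkprm
    · intro j _ _; exact hb j
  have h4 : (∑ j ∈ Finset.Icc 1 m, b j) ≤ 4 / 3 * m := (hcontrol m hκm).2
  have h6 : (∑' j : ℕ, a (j + (n - 1) + 1)) ≤ ∑' j : ℕ, a (j + m + 1) :=
    tail_anti a ha hsum hmn
  have h7 : ((n : ℝ) - 1) < ∑' j : ℕ, a (j + (n - 1) + 1) := by
    have hnot : (n - 1) ∉ {k : ℕ | (∑' j : ℕ, a (j + k + 1)) ≤ (k : ℝ)} := by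
      intro hmem
      have := hkbar.2 hmem
      omega
    simp only [Set.mem_setOf_eq, not_le] at hnot
    have : ((n - 1 : ℕ) : ℝ) = (n : ℝ) - 1 := by
      have : 1 ≤ n := by omega
      push_cast [Nat.cast_sub this]
      ring
    linarith [hnot, this.ge]
  linarith
end

section
/- Let $\tau > 1$, $\delta > 0$, $(\eta_j)$, $(g_j)$ nonnegative sequences with $\sum_j g_j^2 < \infty$, and let $(d_j)$ be data with $\sqrt{\sum_{j=k+1}^m d_j} \ge \sqrt{\sum_{j=k+1}^m g_j^2} - \sqrt{\sum_{j=k+1}^m \eta_j}$ and $\sqrt{\sum_{j=k+1}^m d_j} \le \sqrt{\sum_{j=k+1}^m g_j^2} + \sqrt{\sum_{j=k+1}^m \eta_j}$ for all $k \le m$. Suppose $\sqrt{\sum_{j=1}^m \eta_j} \le \frac{\tau+1}{2}\sqrt{m}\,\delta$ for all $m \ge \kappa/3$, and let $k_{pr} \ge \kappa/3$ satisfy $\sum_{j=k_{pr}+1}^\infty g_j^2 \le \sum_{j=1}^{k_{pr}} \eta_j$. Define $k_{dp}(m) = \min\{0 \le k \le m : \sqrt{\sum_{j=k+1}^m d_j}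 \le \tau\sqrt{m}\delta\}$. Then for every $m$ with $k_{dp}(m) > k_{pr}$ one has $m \le \left(\frac{\tau+1}{\tau-1}\right)^2 k_{pr}$; consequently $\sup_m k_{dp}(m) \le \left(\frac{\tau+1}{\tau-1}\right)^2 k_{pr}$. -/
open Finset

theorem stmt_11 (η g d : ℕ → ℝ) (τ δ κ : ℝ) (hτ : 1 < τ) (hδ : 0 < δ)
    (hη : ∀ j, 0 ≤ η j) (hd : ∀ j, 0 ≤ d j) (hg : ∀ j, 0 ≤ g j)
    (hgsum : Summable (fun j => g j ^ 2))
    (htri1 : ∀ k m : ℕ, k ≤ m →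
      Real.sqrt (∑ j ∈ Finset.Icc (k + 1) m, g j ^ 2)
          - Real.sqrt (∑ j ∈ Finset.Icc (k + 1) m, η j)
        ≤ Real.sqrt (∑ j ∈ Finset.Icc (k + 1) m, d j))
    (htri2 : ∀ k m : ℕ, k ≤ m →
      Real.sqrt (∑ j ∈ Finset.Icc (k + 1) m, d j)
        ≤ Real.sqrt (∑ j ∈ Finset.Icc (k + 1) m, g j ^ 2)
          + Real.sqrt (∑ j ∈ Finset.Icc (k + 1) m, η j))
    (hnoise : ∀ m : ℕ, κ / 3 ≤ (m : ℝ) →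
      Real.sqrt (∑ j ∈ Finset.Icc 1 m, η j) ≤ (τ + 1) / 2 * Real.sqrt m * δ)
    (kpr : ℕ) (hkpr1 : κ / 3 ≤ (kpr : ℝ))
    (hkpr2 : (∑' j : ℕ, g (j + kpr + 1) ^ 2) ≤ ∑ j ∈ Finset.Icc 1 kpr, η j)
    (kdp : ℕ → ℕ)
    (hkdp : ∀ m, kdp m = sInf {k : ℕ | k ≤ m ∧
      Real.sqrt (∑ j ∈ Finset.Icc (k + 1) m, d j) ≤ τ * Real.sqrt m * δ}) :
    (∀ m : ℕ, kpr < kdp m → (m : ℝ) ≤ ((τ + 1) / (τ - 1)) ^ 2 * kpr) ∧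
    (∀ m : ℕ, ((kdp m : ℕ) : ℝ) ≤ ((τ + 1) / (τ - 1)) ^ 2 * kpr) := by

  have hτ1 : (0:ℝ) < τ - 1 := by linarith
  have hmemm : ∀ m : ℕ, m ∈ {k : ℕ | k ≤ m ∧
      Real.sqrt (∑ j ∈ Finset.Icc (k + 1) m, d j) ≤ τ * Real.sqrt m * δ} := by
    intro m
    refine ⟨le_refl m, ?_⟩
    rw [Finset.Icc_eq_empty (by omega)]
    simp
    positivity
  have hle : ∀ m, kdp m ≤ m := by
    intro m; rw [hkdp]; exact Nat.sInf_le (hmemm m)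
  have key : ∀ m : ℕ, kpr < kdp m → (m : ℝ) ≤ ((τ + 1) / (τ - 1)) ^ 2 * kpr := by
    intro m hm
    have hkm : kpr ≤ m := le_of_lt (lt_of_lt_of_le hm (hle m))
    have hfail : τ * Real.sqrt m * δ < Real.sqrt (∑ j ∈ Finset.Icc (kpr + 1) m, d j) := by
      by_contra h
      have : kdp m ≤ kpr := by
        rw [hkdp]; exact Nat.sInf_le ⟨hkm, le_of_not_gt h⟩
      omega
    -- bound g part
    have hsummable : Summable (fun j => g (j + kpr + 1) ^ 2) := by
      have := (summable_nat_add_iff (kpr + 1)).2 hgsum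
      simpa [add_assoc] using this
    have hg1 : ∑ j ∈ Finset.Icc (kpr + 1) m, g j ^ 2 ≤ ∑ j ∈ Finset.Icc 1 kpr, η j := by
      have h1 : ∑ j ∈ Finset.Icc (kpr + 1) m, g j ^ 2
          = ∑ j ∈ Finset.range (m - kpr), g (j + kpr + 1) ^ 2 := by
        rw [← Finset.Ico_add_one_right_eq_Icc, Finset.sum_Ico_eq_sum_range]
        have : m + 1 - (kpr + 1) = m - kpr := by omega
        rw [this]
        exact Finset.sum_congr rfl fun j _ => by rw [show kpr + 1 + j = j + kpr + 1 from by omega]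
      rw [h1]
      exact le_trans (Summable.sum_le_tsum _ (fun j _ => sq_nonneg _) hsummable) hkpr2
    have hgsq : Real.sqrt (∑ j ∈ Finset.Icc (kpr + 1) m, g j ^ 2)
        ≤ (τ + 1) / 2 * Real.sqrt kpr * δ :=
      le_trans (Real.sqrt_le_sqrt hg1) (hnoise kpr hkpr1)
    -- bound η part
    have hηsub : ∑ j ∈ Finset.Icc (kpr + 1) m, η j ≤ ∑ j ∈ Finset.Icc 1 m, η j := by
      apply Finset.sum_le_sum_of_subset_of_nonneg
      · apply Finset.Icc_subset_Icc <;> omega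
      · intro j _ _; exact hη j
    have hηsq : Real.sqrt (∑ j ∈ Finset.Icc (kpr + 1) m, η j)
        ≤ (τ + 1) / 2 * Real.sqrt m * δ := by
      refine le_trans (Real.sqrt_le_sqrt hηsub) (hnoise m ?_)
      exact le_trans hkpr1 (by exact_mod_cast hkm)
    have hcomb := lt_of_lt_of_le hfail (htri2 kpr m hkm)
    have hmain : τ * Real.sqrt m * δ < (τ + 1) / 2 * Real.sqrt kpr * δ
        + (τ + 1) / 2 * Real.sqrt m * δ := lt_of_lt_of_le hcomb (add_le_add hgsq hηsq)
    set a := Real.sqrt kpr with ha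
    set b := Real.sqrt m with hb
    have ha0 : 0 ≤ a := Real.sqrt_nonneg _
    have hb0 : 0 ≤ b := Real.sqrt_nonneg _
    have ha2 : a ^ 2 = (kpr : ℝ) := Real.sq_sqrt (Nat.cast_nonneg _)
    have hb2 : b ^ 2 = (m : ℝ) := Real.sq_sqrt (Nat.cast_nonneg _)
    have hab : (τ - 1) * b ≤ (τ + 1) * a := by nlinarith
    have heq : ((τ + 1) / (τ - 1)) ^ 2 * kpr = (τ + 1) ^ 2 * kpr / (τ - 1) ^ 2 := by
      field_simp
    rw [heq, le_div_iff₀ (by positivity)]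
    have h2 : ((τ - 1) * b) * ((τ - 1) * b) ≤ ((τ + 1) * a) * ((τ + 1) * a) :=
      mul_self_le_mul_self (by positivity) hab
    nlinarith
  refine ⟨key, ?_⟩
  intro m
  rcases le_or_gt (kdp m) kpr with h | h
  · have hfac : (1:ℝ) ≤ ((τ + 1) / (τ - 1)) ^ 2 := by
      have h1 : (1:ℝ) ≤ (τ + 1) / (τ - 1) := by
        rw [le_div_iff₀ hτ1]; linarith
      nlinarith
    have : ((kdp m : ℕ) : ℝ) ≤ (kpr : ℝ) := by exact_mod_cast h
    nlinarith [Nat.cast_nonneg (α := ℝ) kpr]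
  · exact le_trans (by exact_mod_cast hle m) (key m h)
end
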